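/- The quotient of the unit group of R₁₂ by the subgroup generated by the units of A₁ together with the units of A₂ is an infinite cyclic group, generated by the class of −Y⁻¹ (the image of the rational function −z/y). This computes the Čech cohomology group H¹(𝒰, O_C^×) ≅ ℤ for the cover 𝒰 = {U₁, U₂} of the real anisotropic conic. -/

import Mathlib

noncomputable section

/-- The coordinate ring `R₁ = ℝ[X,Y]/(X²+Y²+1)` of the affine open `U₁ = D₊(z)` of the
real anisotropic conic `C = V(x²+y²+z²) ⊂ ℙ²_ℝ`. -/
def R1 : Type :=
  MvPolynomial (Fin 2) ℝ ⧸
    Ideal.span {(MvPolynomial.X 0 : MvPolynomial (Fin 2) ℝ) ^ 2 + MvPolynomial.X 1 ^ 2 + 1}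

instance : CommRing R1 := Ideal.Quotient.commRing _
instance : Algebra ℝ R1 := Ideal.Quotient.algebra ℝ

/-- `X`, the image of the first variable in `R₁` (the rational function `x/z`). -/
def X1 : R1 := Ideal.Quotient.mk _ (MvPolynomial.X 0)

/-- `Y`, the image of the second variable in `R₁` (the rational function `y/z`). -/
def Y1 : R1 := Ideal.Quotient.mk _ (MvPolynomial.X 1)

open Polynomial in
def ψ : ℝ[X] →ₐ[ℝ] R1 := Polynomial.aeval X1

namespace Aux
open Polynomial

lemma rel : X1^2 + Y1^2 + 1 = 0 := by
  have h : (Ideal.Quotient.mk (Ideal.span {(MvPolynomial.X 0 : MvPolynomial (Fin 2) ℝ) ^ 2 + MvPolynomial.X 1 ^ 2 + 1}))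
      ((MvPolynomial.X 0 : MvPolynomial (Fin 2) ℝ) ^ 2 + MvPolynomial.X 1 ^ 2 + 1) = 0 :=
    Ideal.Quotient.eq_zero_iff_mem.mpr (Ideal.subset_span rfl)
  rw [RingHom.map_add, RingHom.map_add, RingHom.map_pow, RingHom.map_pow, RingHom.map_one] at h
  exact h

lemma hY2 : Y1^2 = -X1^2 - 1 := by linear_combination rel

lemma adjoin_X1Y1 : Algebra.adjoin ℝ {X1, Y1} = ⊤ := by
  classical
  let mka : MvPolynomial (Fin 2) ℝ →ₐ[ℝ] R1 := Ideal.Quotient.mkₐ ℝ _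
  have hsurj : Function.Surjective mka := Ideal.Quotient.mkₐ_surjective ℝ _
  have hrange : Set.range (MvPolynomial.X : Fin 2 → MvPolynomial (Fin 2) ℝ)
      = {MvPolynomial.X 0, MvPolynomial.X 1} := by
    ext p
    constructor
    · rintro ⟨i, rfl⟩; fin_cases i <;> simp
    · rintro (rfl | rfl)
      exacts [⟨0, rfl⟩, ⟨1, rfl⟩]
  have : (⊤ : Subalgebra ℝ R1) = Subalgebra.map mka ⊤ := by
    rw [Algebra.map_top, (AlgHom.range_eq_top _).mpr hsurj]
  rw [this, ← MvPolynomial.adjoin_range_X, AlgHom.map_adjoin, hrange]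
  congr 1
  rw [Set.image_insert_eq, Set.image_singleton]
  rfl

lemma algHom_ext_R1 {B : Type*} [Semiring B] [Algebra ℝ B] {f g : R1 →ₐ[ℝ] B}
    (h1 : f X1 = g X1) (h2 : f Y1 = g Y1) : f = g := by
  have hle : Algebra.adjoin ℝ {X1, Y1} ≤ AlgHom.equalizer f g := by
    apply Algebra.adjoin_le
    rintro x (rfl | rfl)
    exacts [h1, h2]
  rw [adjoin_X1Y1] at hle
  ext x
  exact hle (by trivial)

-- product formula
lemma mulE (a b c d : ℝ[X]) :
    (ψ a + ψ b * Y1) * (ψ c + ψ d * Y1)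
      = ψ (a*c - (X^2+1)*b*d) + ψ (a*d + b*c) * Y1 := by
  have h2 := hY2
  simp only [ψ, map_sub, map_add, map_mul, Polynomial.aeval_X, map_pow, map_one]
  linear_combination ((Polynomial.aeval X1) b * (Polynomial.aeval X1) d) * h2

lemma rep (z : R1) : ∃ a b : ℝ[X], z = ψ a + ψ b * Y1 := by
  have hz : z ∈ (⊤ : Subalgebra ℝ R1) := trivial
  rw [← adjoin_X1Y1] at hz
  induction hz using Algebra.adjoin_induction with
  | mem x hx =>
    rcases hx with rfl | rfl
    · exact ⟨X, 0, by simp [ψ]⟩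
    · exact ⟨0, 1, by simp [ψ]⟩
  | algebraMap r => exact ⟨C r, 0, by simp [ψ]⟩
  | add x y hx hy ihx ihy =>
    obtain ⟨a, b, rfl⟩ := ihx; obtain ⟨c, d, rfl⟩ := ihy
    exact ⟨a + c, b + d, by simp only [map_add]; ring⟩
  | mul x y hx hy ihx ihy =>
    obtain ⟨a, b, rfl⟩ := ihx; obtain ⟨c, d, rfl⟩ := ihy
    exact ⟨a*c - (X^2+1)*b*d, a*d + b*c, mulE a b c d⟩

-- evaluation homs
def χ (s : ℝ) : R1 →ₐ[ℝ] ℂ := by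
  refine Ideal.Quotient.liftₐ _
    (MvPolynomial.aeval ![(s:ℂ), Complex.I * ((Real.sqrt (1+s^2) : ℝ) : ℂ)]) ?_
  intro a ha
  rw [Ideal.mem_span_singleton] at ha
  obtain ⟨c, rfl⟩ := ha
  rw [map_mul]
  convert zero_mul _
  have ht : ((Real.sqrt (1+s^2) : ℝ) : ℂ)^2 = 1 + (s:ℂ)^2 := by
    rw [← Complex.ofReal_pow, Real.sq_sqrt (by positivity : (0:ℝ) ≤ 1 + s^2)]
    push_cast; ring
  simp only [map_add, map_pow, map_one, MvPolynomial.aeval_X, Matrix.cons_val_zero,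
    Matrix.cons_val_one, Matrix.head_cons]
  linear_combination ((Real.sqrt (1+s^2) : ℝ) : ℂ)^2 * Complex.I_sq - ht

lemma χ_X1 (s : ℝ) : χ s X1 = (s : ℂ) := by
  rw [χ, X1]
  erw [Ideal.Quotient.lift_mk]
  simp

lemma χ_Y1 (s : ℝ) : χ s Y1 = Complex.I * ((Real.sqrt (1+s^2) : ℝ) : ℂ) := by
  rw [χ, Y1]
  erw [Ideal.Quotient.lift_mk]
  simp

lemma χ_ψ (s : ℝ) (a : ℝ[X]) : χ s (ψ a) = ((a.eval s : ℝ) : ℂ) := by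
  have hcomp : (χ s).comp ψ = Polynomial.aeval ((s : ℝ) : ℂ) := by
    apply Polynomial.algHom_ext
    simp [ψ, χ_X1 s]
  have h1 : χ s (ψ a) = Polynomial.aeval ((s:ℝ) : ℂ) a := by
    rw [← hcomp]; rfl
  rw [h1, show ((s:ℝ):ℂ) = algebraMap ℝ ℂ s from rfl,
    Polynomial.aeval_algebraMap_apply_eq_algebraMap_eval]
  simp

lemma Eunique {a b : ℝ[X]} (h : ψ a + ψ b * Y1 = 0) : a = 0 ∧ b = 0 := by
  have key : ∀ s : ℝ, a.eval s = 0 ∧ b.eval s = 0 := by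
    intro s
    have h0 := congrArg (χ s) h
    rw [map_add, map_mul, map_zero, χ_ψ, χ_ψ, χ_Y1] at h0
    have ht : 0 < Real.sqrt (1+s^2) := Real.sqrt_pos.mpr (by positivity)
    rw [Complex.ext_iff] at h0
    obtain ⟨hre, him⟩ := h0
    simp [Complex.add_re, Complex.mul_re, Complex.mul_im] at hre him
    refine ⟨hre, ?_⟩
    rcases him with h | h
    · exact h
    · exact absurd h ht.ne'
  constructor
  · exact Polynomial.funext fun t => by simpa using (key t).1
  · exact Polynomial.funext fun t => by simpa using (key t).2

lemma Einj {a b c d : ℝ[X]} (h : ψ a + ψ b * Y1 = ψ c + ψ d * Y1) :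
    a = c ∧ b = d := by
  have h0 : ψ (a - c) + ψ (b - d) * Y1 = 0 := by
    simp only [map_sub]
    linear_combination h
  obtain ⟨h1, h2⟩ := Eunique h0
  constructor
  · exact sub_eq_zero.mp h1
  · exact sub_eq_zero.mp h2

noncomputable def Nm (a b : ℝ[X]) : ℝ[X] := a^2 + (X^2+1)*b^2

lemma X2ne : (X^2+1 : ℝ[X]) ≠ 0 := by
  intro h
  have := congrArg (Polynomial.eval 0) h
  simp at this

lemma Nm_mul (a b c d : ℝ[X]) :
    Nm (a*c - (X^2+1)*b*d) (a*d + b*c) = Nm a b * Nm c d := by unfold Nm; ring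

lemma Nm_eq_zero {a b : ℝ[X]} (h : Nm a b = 0) : a = 0 ∧ b = 0 := by
  have key : ∀ t : ℝ, a.eval t = 0 ∧ b.eval t = 0 := by
    intro t
    have h1 := congrArg (Polynomial.eval t) h
    simp only [Nm, eval_add, eval_mul, eval_pow, eval_X, eval_one, eval_zero] at h1
    constructor <;> nlinarith [sq_nonneg (a.eval t), sq_nonneg (b.eval t), sq_nonneg t,
      sq_nonneg (a.eval t * b.eval t)]
  constructor
  · exact Polynomial.funext fun t => by simpa using (key t).1
  · exact Polynomial.funext fun t => by simpa using (key t).2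

lemma prime_Xsq_add_one : Prime (X^2 + 1 : ℝ[X]) := by
  have hirr : Irreducible (X^2 + 1 : ℝ[X]) := by
    have hdeg : (X^2 + 1 : ℝ[X]).natDegree = 2 := by
      simpa using Polynomial.natDegree_X_pow_add_C (n := 2) (r := (1:ℝ))
    rw [Polynomial.irreducible_iff_roots_eq_zero_of_degree_le_three (by omega) (by omega)]
    rw [Multiset.eq_zero_iff_forall_notMem]
    intro r hr
    have hne : (X^2 + 1 : ℝ[X]) ≠ 0 := by
      intro h0; rw [h0] at hdeg; simp at hdeg
    rw [Polynomial.mem_roots hne] at hr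
    have := hr
    simp only [IsRoot, eval_add, eval_pow, eval_X, eval_one] at this
    nlinarith [sq_nonneg r]
  exact hirr.prime


lemma Nm_isUnit {a b : ℝ[X]} (h : IsUnit (Nm a b)) : ∃ r : ℝ, r ≠ 0 ∧ a = C r ∧ b = 0 := by
  obtain ⟨r, hr, hC⟩ := Polynomial.isUnit_iff.mp h
  have hb : b = 0 := by
    by_contra hb
    set m := max a.natDegree (b.natDegree + 1) with hm
    have hm1 : 1 ≤ m := le_trans (by omega) (le_max_right _ _)
    have hdX : (X^2+1 : ℝ[X]).natDegree = 2 := by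
      simpa using Polynomial.natDegree_X_pow_add_C (n := 2) (r := (1:ℝ))
    have hlX : (X^2+1 : ℝ[X]).leadingCoeff = 1 := by
      simpa using Polynomial.leadingCoeff_X_pow_add_C (n := 2) (r := (1:ℝ))
    have hdb : ((X^2+1)*b^2 : ℝ[X]).natDegree = 2*(b.natDegree) + 2 := by
      rw [natDegree_mul X2ne (pow_ne_zero 2 hb), natDegree_pow, hdX]; ring
    have hlb : ((X^2+1)*b^2 : ℝ[X]).leadingCoeff = b.leadingCoeff^2 := by
      rw [leadingCoeff_mul, leadingCoeff_pow, hlX, one_mul]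
    have h1 : 0 ≤ (a^2).coeff (2*m) := by
      rcases eq_or_lt_of_le (le_max_left a.natDegree (b.natDegree+1)) with heq | hlt
      · have hd2 : (a^2).natDegree = 2*m := by rw [natDegree_pow, heq]
        rw [← hd2, coeff_natDegree, leadingCoeff_pow]
        exact sq_nonneg _
      · rw [coeff_eq_zero_of_natDegree_lt (by rw [natDegree_pow]; omega)]
    have h2 : 0 ≤ ((X^2+1)*b^2 : ℝ[X]).coeff (2*m) := by
      rcases eq_or_lt_of_le (le_max_right a.natDegree (b.natDegree+1)) with heq | hlt
      · have hd2 : ((X^2+1)*b^2 : ℝ[X]).natDegree = 2*m := by rw [hdb]; omega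
        rw [← hd2, coeff_natDegree, hlb]
        exact sq_nonneg _
      · rw [coeff_eq_zero_of_natDegree_lt (by omega)]
    have h3 : 0 < (a^2).coeff (2*m) + ((X^2+1)*b^2 : ℝ[X]).coeff (2*m) := by
      rcases max_choice a.natDegree (b.natDegree + 1) with hc | hc
      · have ha0 : a ≠ 0 := by
          intro h0
          simp [h0] at hc
        rw [hc] at hm
        have hd2 : (a^2).natDegree = 2*m := by rw [natDegree_pow]; omega
        have : (a^2).coeff (2*m) = a.leadingCoeff^2 := by
          rw [← hd2, coeff_natDegree, leadingCoeff_pow]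
        rw [this]
        have := pow_pos (abs_pos.mpr (leadingCoeff_ne_zero.mpr ha0)) 2
        nlinarith [sq_nonneg a.leadingCoeff, leadingCoeff_ne_zero.mpr ha0, h2,
          sq_abs a.leadingCoeff]
      · rw [hc] at hm
        have hd2 : ((X^2+1)*b^2 : ℝ[X]).natDegree = 2*m := by rw [hdb]; omega
        have : ((X^2+1)*b^2 : ℝ[X]).coeff (2*m) = b.leadingCoeff^2 := by
          rw [← hd2, coeff_natDegree, hlb]
        rw [this]
        have hlb0 : b.leadingCoeff ≠ 0 := leadingCoeff_ne_zero.mpr hb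
        nlinarith [sq_abs b.leadingCoeff, abs_pos.mpr hlb0, h1]
    have hz : (Nm a b).coeff (2*m) = 0 := by
      rw [← hC, coeff_C, if_neg (by omega)]
    rw [Nm, coeff_add] at hz
    linarith
  subst hb
  have ha2 : a^2 = C r := by rw [hC]; unfold Nm; ring
  have hd0 : a.natDegree = 0 := by
    have := congrArg natDegree ha2
    rw [natDegree_pow, natDegree_C] at this
    omega
  have ha : a = C (a.coeff 0) := Polynomial.eq_C_of_natDegree_eq_zero hd0
  refine ⟨a.coeff 0, ?_, ha, rfl⟩
  intro h0
  rw [h0, map_zero] at ha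
  rw [ha] at ha2
  have : r = 0 := by simpa [eq_comm, ← Polynomial.C_eq_zero] using ha2.symm
  exact hr.ne_zero this

lemma Ezero {a b : ℝ[X]} (h : ψ a + ψ b * Y1 = 0) : a = 0 ∧ b = 0 := Eunique h

lemma one_eq_E : (1 : R1) = ψ 1 + ψ 0 * Y1 := by simp

lemma nontrivial_R1 : (1 : R1) ≠ 0 := by
  intro h
  rw [one_eq_E] at h
  exact one_ne_zero (Eunique h).1

instance : Nontrivial R1 := ⟨1, 0, nontrivial_R1⟩

instance : NoZeroDivisors R1 := by
  constructor
  intro z w h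
  obtain ⟨a, b, rfl⟩ := rep z
  obtain ⟨c, d, rfl⟩ := rep w
  rw [mulE] at h
  obtain ⟨h1, h2⟩ := Eunique h
  have hN : Nm a b * Nm c d = 0 := by
    rw [← Nm_mul, h1, h2]
    unfold Nm; ring
  rcases mul_eq_zero.mp hN with hN | hN
  · obtain ⟨ha, hb⟩ := Nm_eq_zero hN
    left; rw [ha, hb]; simp
  · obtain ⟨ha, hb⟩ := Nm_eq_zero hN
    right; rw [ha, hb]; simp

instance : IsDomain R1 := NoZeroDivisors.to_isDomain R1

lemma isUnit_R1 {z : R1} (h : IsUnit z) : ∃ r : ℝ, r ≠ 0 ∧ z = algebraMap ℝ R1 r := by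
  obtain ⟨u, rfl⟩ := h
  obtain ⟨a, b, hu⟩ := rep (u : R1)
  obtain ⟨c, d, hv⟩ := rep ((u⁻¹ : R1ˣ) : R1)
  have h1 : (ψ a + ψ b * Y1) * (ψ c + ψ d * Y1) = ψ 1 + ψ 0 * Y1 := by
    rw [← hu, ← hv]
    simp [u.mul_inv]
  rw [mulE] at h1
  obtain ⟨h5, h6⟩ := Einj h1
  have hNu : IsUnit (Nm a b) := by
    apply IsUnit.of_mul_eq_one (Nm c d)
    rw [← Nm_mul, h5, h6]
    unfold Nm; ring
  obtain ⟨r, hr, ha, hb⟩ := Nm_isUnit hNu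
  refine ⟨r, hr, ?_⟩
  rw [hu, ha, hb]
  simp [ψ, Polynomial.aeval_C]

lemma Y1_eq_E : Y1 = ψ 0 + ψ 1 * Y1 := by simp

lemma Y1_ne_zero : Y1 ≠ 0 := by
  intro h
  rw [Y1_eq_E] at h
  exact one_ne_zero (Eunique h).2

lemma Y1_not_unit : ¬ IsUnit Y1 := by
  intro h
  obtain ⟨r, hr, hY⟩ := isUnit_R1 h
  have : ψ 0 + ψ 1 * Y1 = ψ (C r) + ψ 0 * Y1 := by
    rw [← Y1_eq_E, hY]
    simp [ψ, Polynomial.aeval_C]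
  exact one_ne_zero (Einj this).2

lemma Y1_dvd_iff (a b : ℝ[X]) : Y1 ∣ (ψ a + ψ b * Y1) ↔ (X^2+1) ∣ a := by
  constructor
  · rintro ⟨z, hz⟩
    obtain ⟨c, d, rfl⟩ := rep z
    rw [show Y1 * (ψ c + ψ d * Y1) = (ψ 0 + ψ 1 * Y1) * (ψ c + ψ d * Y1) by simp,
      mulE] at hz
    obtain ⟨h1, _⟩ := Einj hz
    exact ⟨-d, by rw [h1]; ring⟩
  · rintro ⟨k, rfl⟩
    refine ⟨ψ b + ψ (-k) * Y1, ?_⟩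
    rw [show Y1 * (ψ b + ψ (-k) * Y1) = (ψ 0 + ψ 1 * Y1) * (ψ b + ψ (-k) * Y1) by simp,
      mulE, show (0*b - (X^2+1)*1*(-k) : ℝ[X]) = (X^2+1)*k from by ring,
      show (0*(-k) + 1*b : ℝ[X]) = b from by ring]

lemma prime_Y1 : Prime Y1 := by
  refine ⟨Y1_ne_zero, Y1_not_unit, ?_⟩
  intro z w h
  obtain ⟨a, b, rfl⟩ := rep z
  obtain ⟨c, d, rfl⟩ := rep w
  rw [mulE, Y1_dvd_iff] at h
  have h2 : (X^2+1 : ℝ[X]) ∣ a * c := by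
    obtain ⟨k, hk⟩ := h
    exact ⟨k + b*d, by linear_combination hk⟩
  rcases prime_Xsq_add_one.2.2 _ _ h2 with h3 | h3
  · left; rw [Y1_dvd_iff]; exact h3
  · right; rw [Y1_dvd_iff]; exact h3

lemma factor : ∀ (k : ℕ) (z w : R1), z * w = Y1^k →
    ∃ (r : ℝ) (j : ℕ), r ≠ 0 ∧ z = algebraMap ℝ R1 r * Y1^j := by
  intro k
  induction k with
  | zero =>
    intro z w h
    rw [pow_zero] at h
    obtain ⟨r, hr, hz⟩ := isUnit_R1 (IsUnit.of_mul_eq_one _ h)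
    exact ⟨r, 0, hr, by rw [hz, pow_zero, mul_one]⟩
  | succ k ih =>
    intro z w h
    have hd : Y1 ∣ z * w := ⟨Y1^k, by rw [h]; ring⟩
    rcases prime_Y1.2.2 _ _ hd with ⟨z', rfl⟩ | ⟨w', rfl⟩
    · have h2 : z' * w = Y1^k := by
        apply mul_left_cancel₀ Y1_ne_zero
        linear_combination h
      obtain ⟨r, j, hr, hz⟩ := ih _ _ h2
      exact ⟨r, j+1, hr, by rw [hz]; ring⟩
    · have h2 : z * w' = Y1^k := by
        apply mul_left_cancel₀ Y1_ne_zero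
        linear_combination h
      exact ih _ _ h2

end Aux

-- localization layer (to be appended inside namespace after statement defs)

/-- `R₁₂ = R₁[Y⁻¹]`, the localization of `R₁` away from `Y`: the coordinate ring of
`U₁ ∩ U₂` where `U₂ = D₊(y)`. -/
abbrev R12 : Type := Localization.Away Y1

/-- The image of `X` in `R₁₂`. -/
def X12 : R12 := algebraMap R1 R12 X1

/-- The image of `Y` in `R₁₂`. -/
def Y12 : R12 := algebraMap R1 R12 Y1

/-- `Y` as a unit of `R₁₂`. -/
def Yu : R12ˣ := (IsLocalization.Away.algebraMap_isUnit (S := R12) Y1).unit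

/-- `A₁`, the image of `R₁` in `R₁₂`: the `ℝ`-subalgebra generated by `X` and `Y`. -/
def A1 : Subalgebra ℝ R12 := Algebra.adjoin ℝ {X12, Y12}

/-- `A₂`, the `ℝ`-subalgebra of `R₁₂` generated by `X·Y⁻¹` (i.e. `x/y`) and `Y⁻¹`
(i.e. `z/y`); it is isomorphic to the coordinate ring `R₂` of `U₂`. -/
def A2 : Subalgebra ℝ R12 := Algebra.adjoin ℝ {X12 * (↑Yu⁻¹ : R12), (↑Yu⁻¹ : R12)}

namespace Aux2
open Aux

lemma tower_test : IsScalarTower ℝ R1 R12 := inferInstance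

lemma phi_inj : Function.Injective (algebraMap R1 R12) :=
  IsLocalization.injective R12 (powers_le_nonZeroDivisors_of_noZeroDivisors Y1_ne_zero)

lemma Yu_val : (Yu : R12) = Y12 := rfl

def φa : R1 →ₐ[ℝ] R12 := IsScalarTower.toAlgHom ℝ R1 R12

lemma memA1 (x : R12) : x ∈ A1 ↔ ∃ z : R1, algebraMap R1 R12 z = x := by
  have h1 : A1 = (Algebra.adjoin ℝ {X1, Y1}).map φa := by
    rw [AlgHom.map_adjoin]
    unfold A1
    congr 1
    rw [Set.image_insert_eq, Set.image_singleton]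
    rfl
  rw [h1, adjoin_X1Y1]
  constructor
  · rintro ⟨z, -, rfl⟩; exact ⟨z, rfl⟩
  · rintro ⟨z, rfl⟩; exact ⟨z, trivial, rfl⟩
end Aux2

namespace Aux2
open Aux

/-- real units into `R12ˣ` -/
def ρ : ℝˣ →* R12ˣ := Units.map (algebraMap ℝ R12 : ℝ →+* R12).toMonoidHom

lemma ρ_val (r : ℝˣ) : ((ρ r : R12ˣ) : R12) = algebraMap ℝ R12 (r : ℝ) := rfl

lemma alg_comm (r : ℝ) : algebraMap ℝ R12 r = algebraMap R1 R12 (algebraMap ℝ R1 r) :=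
  (IsScalarTower.algebraMap_apply ℝ R1 R12 r)

/-- classification of units of R12 -/
lemma units_R12 (u : R12ˣ) : ∃ (r : ℝˣ) (n : ℤ), u = ρ r * Yu ^ n := by
  obtain ⟨⟨z, s⟩, hs⟩ := IsLocalization.surj (Submonoid.powers Y1) (u : R12)
  obtain ⟨n, hn⟩ := s.2
  obtain ⟨⟨w, t⟩, ht⟩ := IsLocalization.surj (Submonoid.powers Y1) ((u⁻¹ : R12ˣ) : R12)
  obtain ⟨m, hm⟩ := t.2
  simp only at hs ht
  rw [show (s : R1) = Y1 ^ n from hn.symm] at hs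
  rw [show (t : R1) = Y1 ^ m from hm.symm] at ht
  have hzw : z * w = Y1 ^ (n + m) := by
    apply phi_inj
    rw [map_mul, ← hs, ← ht, pow_add, map_mul]
    have h1 : ((u : R12) * ((u⁻¹ : R12ˣ) : R12)) = 1 := by
      rw [← Units.val_mul, mul_inv_cancel, Units.val_one]
    linear_combination (algebraMap R1 R12 (Y1^n) * algebraMap R1 R12 (Y1^m)) * h1
  obtain ⟨r, j, hr, hz⟩ := factor (n + m) z w hzw
  refine ⟨Units.mk0 r hr, (j : ℤ) - n, ?_⟩
  have key : u * Yu ^ n = ρ (Units.mk0 r hr) * Yu ^ j := by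
    apply Units.ext
    rw [Units.val_mul, Units.val_mul, Units.val_pow_eq_pow_val, Units.val_pow_eq_pow_val, Yu_val]
    show (u : R12) * (Y12 : R12) ^ n = algebraMap ℝ R12 r * (Y12 : R12) ^ j
    have hpow : ∀ i : ℕ, (Y12 : R12) ^ i = algebraMap R1 R12 (Y1 ^ i) := by
      intro i; rw [map_pow]; rfl
    rw [hpow, hpow, hs, hz, map_mul, ← alg_comm]
  have keyz : u * Yu ^ (n : ℤ) = ρ (Units.mk0 r hr) * Yu ^ (j : ℤ) := by
    rw [zpow_natCast, zpow_natCast]; exact key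
  have h2 : Yu ^ ((j:ℤ) - n) = Yu ^ (j:ℤ) * (Yu ^ ((n:ℕ) : ℤ))⁻¹ := by
    rw [sub_eq_add_neg, zpow_add, zpow_neg]
  rw [h2]
  have := congrArg (fun v => v * (Yu ^ ((n:ℕ):ℤ))⁻¹) keyz
  simp only [mul_assoc, mul_inv_cancel, mul_one] at this
  exact this

lemma unitsOf_A1_sub (u : R12ˣ) (hu : (u : R12) ∈ A1) (hv : ((u⁻¹ : R12ˣ) : R12) ∈ A1) :
    ∃ r : ℝˣ, u = ρ r := by
  obtain ⟨z, hz⟩ := (memA1 _).mp hu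
  obtain ⟨w, hw⟩ := (memA1 _).mp hv
  have h1 : z * w = 1 := by
    apply phi_inj
    rw [map_mul, hz, hw, map_one, ← Units.val_mul, mul_inv_cancel, Units.val_one]
  obtain ⟨r, hr, hzr⟩ := isUnit_R1 (IsUnit.of_mul_eq_one _ h1)
  refine ⟨Units.mk0 r hr, Units.ext ?_⟩
  rw [ρ_val, ← hz, hzr, ← alg_comm]
  rfl

end Aux2

namespace Aux2
open Aux

lemma rel12 : X12^2 + Y12^2 + 1 = 0 := by
  have h := congrArg (algebraMap R1 R12) rel
  rw [map_add, map_add, map_pow, map_pow, map_one, map_zero] at h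
  exact h

lemma Y12_Yi : Y12 * (↑Yu⁻¹ : R12) = 1 := by
  rw [← Yu_val]; exact Yu.mul_inv

lemma Yi_Y12 : (↑Yu⁻¹ : R12) * Y12 = 1 := by
  rw [← Yu_val]; exact Yu.inv_mul

def τ : R1 →ₐ[ℝ] R12 := by
  refine Ideal.Quotient.liftₐ _
    (MvPolynomial.aeval ![X12 * (↑Yu⁻¹ : R12), (↑Yu⁻¹ : R12)]) ?_
  intro a ha
  rw [Ideal.mem_span_singleton] at ha
  obtain ⟨c, rfl⟩ := ha
  rw [map_mul]
  convert zero_mul _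
  simp only [map_add, map_pow, map_one, MvPolynomial.aeval_X, Matrix.cons_val_zero,
    Matrix.cons_val_one, Matrix.head_cons]
  linear_combination ((↑Yu⁻¹ : R12))^2 * rel12 - (Y12 * (↑Yu⁻¹ : R12) + 1) * Y12_Yi

lemma τ_X1 : τ X1 = X12 * (↑Yu⁻¹ : R12) := by
  have h : τ (Ideal.Quotient.mk _ (MvPolynomial.X 0)) = X12 * (↑Yu⁻¹ : R12) := by
    rw [τ]
    erw [Ideal.Quotient.lift_mk]
    simp
  exact h

lemma τ_Y1 : τ Y1 = (↑Yu⁻¹ : R12) := by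
  have h : τ (Ideal.Quotient.mk _ (MvPolynomial.X 1)) = (↑Yu⁻¹ : R12) := by
    rw [τ]
    erw [Ideal.Quotient.lift_mk]
    simp
  exact h

def σ0 : R12 →+* R12 :=
  IsLocalization.Away.lift (g := (τ : R1 →ₐ[ℝ] R12).toRingHom) Y1
    (by rw [AlgHom.toRingHom_eq_coe, RingHom.coe_coe, τ_Y1]; exact (Yu⁻¹).isUnit)

lemma σcomm (z : R1) : σ0 (algebraMap R1 R12 z) = τ z :=
  IsLocalization.Away.lift_eq _ _ _

def σa : R12 →ₐ[ℝ] R12 :=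
  { σ0 with
    commutes' := fun c => by
      show σ0 (algebraMap ℝ R12 c) = algebraMap ℝ R12 c
      rw [alg_comm, σcomm]
      exact τ.commutes c }

lemma σa_apply (x : R12) : σa x = σ0 x := rfl

lemma σ_X12 : σa X12 = X12 * (↑Yu⁻¹ : R12) := by
  have h : σa (algebraMap R1 R12 X1) = X12 * (↑Yu⁻¹ : R12) := by
    rw [σa_apply, σcomm, τ_X1]
  exact h

lemma σ_Y12 : σa Y12 = (↑Yu⁻¹ : R12) := by
  have h : σa (algebraMap R1 R12 Y1) = (↑Yu⁻¹ : R12) := by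
    rw [σa_apply, σcomm, τ_Y1]
  exact h

lemma σ_Yi : σa (↑Yu⁻¹ : R12) = Y12 := by
  have h2 : σa Y12 * σa (↑Yu⁻¹ : R12) = 1 := by
    rw [← map_mul, Y12_Yi, map_one]
  rw [σ_Y12] at h2
  calc σa (↑Yu⁻¹ : R12) = (Y12 * (↑Yu⁻¹ : R12)) * σa (↑Yu⁻¹ : R12) := by rw [Y12_Yi, one_mul]
    _ = Y12 * ((↑Yu⁻¹ : R12) * σa (↑Yu⁻¹ : R12)) := by ring
    _ = Y12 := by rw [h2, mul_one]

lemma σ_τ (z : R1) : σa (τ z) = algebraMap R1 R12 z := by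
  have h : σa.comp τ = φa := by
    apply algHom_ext_R1
    · rw [AlgHom.comp_apply, τ_X1, map_mul, σ_X12, σ_Yi]
      show X12 * (↑Yu⁻¹ : R12) * Y12 = φa X1
      rw [mul_assoc, Yi_Y12, mul_one]
      rfl
    · rw [AlgHom.comp_apply, τ_Y1, σ_Yi]
      rfl
  exact AlgHom.congr_fun h z

lemma σ_invol (x : R12) : σa (σa x) = x := by
  have h : σ0.comp σ0 = RingHom.id R12 := by
    apply IsLocalization.ringHom_ext (Submonoid.powers Y1)
    ext z
    show σ0 (σ0 (algebraMap R1 R12 z)) = algebraMap R1 R12 z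
    rw [σcomm]
    exact σ_τ z
  exact RingHom.congr_fun h x

lemma σ_inj : Function.Injective σa := by
  intro x y h
  rw [← σ_invol x, ← σ_invol y, h]

lemma A2_eq : A2 = A1.map σa := by
  unfold A2 A1
  rw [AlgHom.map_adjoin]
  congr 1
  rw [Set.image_insert_eq, Set.image_singleton, σ_X12, σ_Y12]

lemma unitsOf_A2_sub (u : R12ˣ) (hu : (u : R12) ∈ A2) (hv : ((u⁻¹ : R12ˣ) : R12) ∈ A2) :
    ∃ r : ℝˣ, u = ρ r := by
  rw [A2_eq, Subalgebra.mem_map] at hu hv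
  obtain ⟨a, ha, hau⟩ := hu
  obtain ⟨b, hb, hbv⟩ := hv
  obtain ⟨z, rfl⟩ := (memA1 _).mp ha
  obtain ⟨w, rfl⟩ := (memA1 _).mp hb
  have h1 : z * w = 1 := by
    apply phi_inj
    rw [map_mul, map_one]
    apply σ_inj
    rw [map_mul, map_one, hau, hbv, ← Units.val_mul, mul_inv_cancel, Units.val_one]
  obtain ⟨r, hr, hzr⟩ := isUnit_R1 (IsUnit.of_mul_eq_one _ h1)
  refine ⟨Units.mk0 r hr, Units.ext ?_⟩
  rw [ρ_val, ← hau, hzr, ← alg_comm, σa.commutes]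
  rfl

end Aux2


/-- The set of units of `R₁₂` lying in a subalgebra `A` (with inverse also in `A`):
these are the units of `A` viewed inside `R₁₂ˣ`. -/
def unitsOf (A : Subalgebra ℝ R12) : Set R12ˣ :=
  {u | (u : R12) ∈ A ∧ ((u⁻¹ : R12ˣ) : R12) ∈ A}

/-- The subgroup of `R₁₂ˣ` generated by the units of `A₁` together with the units
of `A₂`. -/
def H : Subgroup R12ˣ := Subgroup.closure (unitsOf A1 ∪ unitsOf A2)

namespace Aux2
open Aux

lemma ρ_mem_H (r : ℝˣ) : ρ r ∈ H := by
  apply Subgroup.subset_closure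
  left
  constructor
  · show ((ρ r : R12ˣ) : R12) ∈ A1
    rw [ρ_val]
    exact A1.algebraMap_mem _
  · show (((ρ r)⁻¹ : R12ˣ) : R12) ∈ A1
    rw [← map_inv, ρ_val]
    exact A1.algebraMap_mem _

lemma H_le {u : R12ˣ} (hu : u ∈ H) : ∃ r : ℝˣ, u = ρ r := by
  have hle : H ≤ ρ.range := by
    apply Subgroup.closure_le _ |>.mpr
    rintro v (hv | hv)
    · obtain ⟨r, rfl⟩ := unitsOf_A1_sub v hv.1 hv.2
      exact ⟨r, rfl⟩
    · obtain ⟨r, rfl⟩ := unitsOf_A2_sub v hv.1 hv.2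
      exact ⟨r, rfl⟩
  obtain ⟨r, hr⟩ := hle hu
  exact ⟨r, hr.symm⟩

lemma negYuInv : (-(Yu⁻¹) : R12ˣ) = ρ (-1) * Yu⁻¹ := by
  apply Units.ext
  rw [Units.val_neg, Units.val_mul, ρ_val]
  push_cast
  ring

lemma Yu_pow_not_const (m : ℕ) (hm : m ≠ 0) (t : ℝˣ) : Yu ^ m ≠ ρ t := by
  intro h
  have hval : algebraMap R1 R12 (Y1 ^ m) = algebraMap ℝ R12 (t : ℝ) := by
    have := congrArg (fun u : R12ˣ => (u : R12)) h
    simp only [Units.val_pow_eq_pow_val, ρ_val] at this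
    rw [map_pow]
    exact this
  rw [alg_comm] at hval
  have h2 : Y1 ^ m = algebraMap ℝ R1 (t : ℝ) := phi_inj hval
  have h3 : IsUnit (Y1 ^ m) := by
    rw [h2]
    exact (t.isUnit).map (algebraMap ℝ R1)
  rw [isUnit_pow_iff hm] at h3
  exact Y1_not_unit h3

end Aux2


open Aux Aux2 in
/-- the quotient of `R₁₂ˣ` by the subgroup generated by the units of `A₁`
together with the units of `A₂` is infinite cyclic, generated by the class of `−Y⁻¹`
(the image of the rational function `−z/y`).  This computes the Čech cohomology group
`H¹(𝒰, O_C^×) ≅ ℤ` for the cover `𝒰 = {U₁, U₂}` of the real anisotropic conic. -/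
theorem statement_6 :
    (∀ x : R12ˣ ⧸ H, ∃ n : ℤ,
      x = (QuotientGroup.mk (-(Yu⁻¹)) : R12ˣ ⧸ H) ^ n) ∧
    (∀ n : ℤ, (QuotientGroup.mk (-(Yu⁻¹)) : R12ˣ ⧸ H) ^ n = 1 → n = 0) := by
  have hneg : (QuotientGroup.mk (-(Yu⁻¹)) : R12ˣ ⧸ H) = (QuotientGroup.mk Yu)⁻¹ := by
    rw [negYuInv, QuotientGroup.mk_mul,
      (QuotientGroup.eq_one_iff _).mpr (ρ_mem_H (-1)), QuotientGroup.mk_inv]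
    exact one_mul ((QuotientGroup.mk Yu : R12ˣ ⧸ H)⁻¹)
  constructor
  · intro x
    obtain ⟨u, rfl⟩ := QuotientGroup.mk_surjective x
    obtain ⟨r, n, rfl⟩ := units_R12 u
    refine ⟨-n, ?_⟩
    rw [QuotientGroup.mk_mul, (QuotientGroup.eq_one_iff _).mpr (ρ_mem_H r),
      QuotientGroup.mk_zpow, hneg]
    have hg : ((QuotientGroup.mk Yu : R12ˣ ⧸ H)⁻¹) ^ (-n) = (QuotientGroup.mk Yu : R12ˣ ⧸ H) ^ n := by
      group
    rw [hg]
    exact one_mul ((QuotientGroup.mk Yu : R12ˣ ⧸ H) ^ n)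
  · intro n hn
    rw [hneg] at hn
    have hn' : (QuotientGroup.mk (Yu ^ (-n)) : R12ˣ ⧸ H) = 1 := by
      rw [QuotientGroup.mk_zpow]
      calc (QuotientGroup.mk Yu : R12ˣ ⧸ H) ^ (-n)
          = ((QuotientGroup.mk Yu : R12ˣ ⧸ H)⁻¹) ^ n := by group
        _ = 1 := hn
    rw [QuotientGroup.eq_one_iff] at hn'
    obtain ⟨r, hr⟩ := H_le hn'
    by_contra hn0
    rcases lt_or_gt_of_ne (show n ≠ 0 from hn0) with hlt | hgt
    · have hm : Yu ^ n.natAbs = ρ r := by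
        rw [← zpow_natCast, show ((n.natAbs : ℤ)) = -n from by omega]
        exact hr
      exact Yu_pow_not_const n.natAbs (by omega) r hm
    · have h1 : Yu ^ (n : ℤ) = (ρ r)⁻¹ := by rw [← hr]; group
      have hm : Yu ^ n.natAbs = ρ r⁻¹ := by
        rw [← zpow_natCast, show ((n.natAbs : ℤ)) = n from by omega, h1, ← map_inv]
      exact Yu_pow_not_const n.natAbs (by omega) r⁻¹ hm
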